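/- If Γ₁ ÷ x = Γ₂ holds via context difference, then Γ₁ and Γ₂ have the same linear domain; consequently, repeated context difference over a list of variables preserves the linear portion of the context. -/

import Mathlib

inductive Mult | un | lin
  deriving DecidableEq

inductive Base | m | s | t
  deriving DecidableEq

structure Kind where
  base : Base
  mult : Mult
  deriving DecidableEq

inductive BaseLe : Base → Base → Prop
  | refl (b) : BaseLe b b
  | mt : BaseLe .m .t
  | st : BaseLe .s .t

inductive MultLe : Mult → Mult → Prop
  | refl (m) : MultLe m m
  | unlin : MultLe .un .lin

/-- Subkinding on kinds `υ^m`. -/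
def Subkind (κ₁ κ₂ : Kind) : Prop :=
  BaseLe κ₁.base κ₂.base ∧ MultLe κ₁.mult κ₂.mult

/-- Types of linear System F with context-free session types. -/
inductive Ty
  | unit
  | arrow (m : Mult) (T U : Ty)
  | skip
  | out (T : Ty)
  | inn (T : Ty)
  | ichoice (l : List (String × Ty))
  | echoice (l : List (String × Ty))
  | seq (T U : Ty)
  | var (a : ℕ)
  | mu (a : ℕ) (κ : Kind) (T : Ty)
  | all (a : ℕ) (κ : Kind) (T : Ty)

/-- Capture-naive simultaneous substitution. -/
def Ty.subst (σ : ℕ → Ty) : Ty → Ty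
  | .unit => .unit
  | .arrow m T U => .arrow m (T.subst σ) (U.subst σ)
  | .skip => .skip
  | .out T => .out (T.subst σ)
  | .inn T => .inn (T.subst σ)
  | .ichoice l => .ichoice (l.attach.map (fun p => (p.1.1, p.1.2.subst σ)))
  | .echoice l => .echoice (l.attach.map (fun p => (p.1.1, p.1.2.subst σ)))
  | .seq T U => .seq (T.subst σ) (U.subst σ)
  | .var a => σ a
  | .mu a κ T => .mu a κ (T.subst (Function.update σ a (.var a)))
  | .all a κ T => .all a κ (T.subst (Function.update σ a (.var a)))
decreasing_by all_goals first
  | (simp_wf; omega)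
  | (obtain ⟨⟨x,b⟩,hm⟩ := p
     have h := List.sizeOf_lt_of_mem hm
     simp_wf
     simp at h
     omega)
  | simp_wf

/-- One-variable substitution `[U/a]`. -/
def subOne (a : ℕ) (U : Ty) : Ty → Ty :=
  Ty.subst (Function.update Ty.var a U)

/-- Terminated (session) types, `⊢ T ✓`. -/
inductive Done : Ty → Prop
  | skip : Done .skip
  | seq {T U} : Done T → Done U → Done (.seq T U)
  | mu {a κ T} : Done T → Done (.mu a κ T)

/-- Contractivity of a type on a type variable. -/
inductive Contr (a : ℕ) : Ty → Prop
  | unit : Contr a .unit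
  | arrow (m T U) : Contr a (.arrow m T U)
  | skip : Contr a .skip
  | out (T) : Contr a (.out T)
  | inn (T) : Contr a (.inn T)
  | ichoice (l) : Contr a (.ichoice l)
  | echoice (l) : Contr a (.echoice l)
  | seq {T U} : Contr a T → (Done T → Contr a U) → Contr a (.seq T U)
  | var {b} : b ≠ a → Contr a (.var b)
  | mu {b κ T} : Contr a T → Contr a (.mu b κ T)
  | all (b κ T) : Contr a (.all b κ T)

abbrev KCtx := ℕ → Option Kind

/-- Declarative kinding `Δ ⊢ T : κ`, with subsumption. -/
inductive Kinding : KCtx → Ty → Kind → Prop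
  | unit {Δ} : Kinding Δ .unit ⟨.m, .un⟩
  | arrow {Δ m T U κ₁ κ₂} : Kinding Δ T κ₁ → Kinding Δ U κ₂ →
      Kinding Δ (.arrow m T U) ⟨.t, m⟩
  | skip {Δ} : Kinding Δ .skip ⟨.s, .un⟩
  | out {Δ T} : Kinding Δ T ⟨.m, .lin⟩ → Kinding Δ (.out T) ⟨.s, .lin⟩
  | inn {Δ T} : Kinding Δ T ⟨.m, .lin⟩ → Kinding Δ (.inn T) ⟨.s, .lin⟩
  | ichoice {Δ l} : (∀ p ∈ l, Kinding Δ p.2 ⟨.s, .lin⟩) →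
      Kinding Δ (.ichoice l) ⟨.s, .lin⟩
  | echoice {Δ l} : (∀ p ∈ l, Kinding Δ p.2 ⟨.s, .lin⟩) →
      Kinding Δ (.echoice l) ⟨.s, .lin⟩
  | seq {Δ T U} : Kinding Δ T ⟨.s, .lin⟩ → Kinding Δ U ⟨.s, .lin⟩ →
      Kinding Δ (.seq T U) ⟨.s, .lin⟩
  | var {Δ a κ} : Δ a = some κ → Kinding Δ (.var a) κ
  | mu {Δ a κ T} : Contr a T → Kinding (Function.update Δ a (some κ)) T κ →
      Kinding Δ (.mu a κ T) κ
  | all {Δ a κ T υ m} : Kinding (Function.update Δ a (some κ)) T ⟨υ, m⟩ →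
      Kinding Δ (.all a κ T) ⟨.t, m⟩
  | sub {Δ T κ₁ κ₂} : Kinding Δ T κ₁ → Subkind κ₁ κ₂ → Kinding Δ T κ₂

mutual
  /-- Algorithmic kind synthesis `Δ ⊢ T ⇒ κ`. -/
  inductive AlgKind : KCtx → Ty → Kind → Prop
    | unit {Δ} : AlgKind Δ .unit ⟨.m, .un⟩
    | arrow {Δ m T U κ₁ κ₂} : AlgKind Δ T κ₁ → AlgKind Δ U κ₂ →
        AlgKind Δ (.arrow m T U) ⟨.t, m⟩
    | skip {Δ} : AlgKind Δ .skip ⟨.s, .un⟩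
    | out {Δ T} : AlgChk Δ T ⟨.m, .lin⟩ → AlgKind Δ (.out T) ⟨.s, .lin⟩
    | inn {Δ T} : AlgChk Δ T ⟨.m, .lin⟩ → AlgKind Δ (.inn T) ⟨.s, .lin⟩
    | ichoice {Δ l} : (∀ p ∈ l, AlgChk Δ p.2 ⟨.s, .lin⟩) →
        AlgKind Δ (.ichoice l) ⟨.s, .lin⟩
    | echoice {Δ l} : (∀ p ∈ l, AlgChk Δ p.2 ⟨.s, .lin⟩) →
        AlgKind Δ (.echoice l) ⟨.s, .lin⟩
    | seq {Δ T U} : AlgChk Δ T ⟨.s, .lin⟩ → AlgChk Δ U ⟨.s, .lin⟩ →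
        AlgKind Δ (.seq T U) ⟨.s, .lin⟩
    | var {Δ a κ} : Δ a = some κ → AlgKind Δ (.var a) κ
    | mu {Δ a κ T} : Contr a T →
        AlgChk (Function.update Δ a (some κ)) T κ →
        AlgKind Δ (.mu a κ T) κ
    | all {Δ a κ T υ m} :
        AlgKind (Function.update Δ a (some κ)) T ⟨υ, m⟩ →
        AlgKind Δ (.all a κ T) ⟨.t, m⟩

  /-- Algorithmic kind check-against `Δ ⊢ T ⇐ κ`. -/
  inductive AlgChk : KCtx → Ty → Kind → Prop
    | mk {Δ T κ₁ κ₂} : AlgKind Δ T κ₁ → Subkind κ₁ κ₂ → AlgChk Δ T κ₂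
end

/-- Declarative type equivalence `Δ ⊢ T ≃ U : κ` (equi-recursive unfolding,
    Skip as unit of sequencing, associativity, congruence). -/
inductive TyEquiv (Δ : KCtx) : Ty → Ty → Kind → Prop
  | refl {T κ} : Kinding Δ T κ → TyEquiv Δ T T κ
  | symm {T U κ} : TyEquiv Δ T U κ → TyEquiv Δ U T κ
  | trans {T U V κ} : TyEquiv Δ T U κ → TyEquiv Δ U V κ → TyEquiv Δ T V κ
  | unfold {a κ T} : Kinding Δ (.mu a κ T) κ →
      TyEquiv Δ (.mu a κ T) (subOne a (.mu a κ T) T) κ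
  | skipL {T m} : Kinding Δ T ⟨.s, m⟩ →
      TyEquiv Δ (.seq .skip T) T ⟨.s, m⟩
  | skipR {T m} : Kinding Δ T ⟨.s, m⟩ →
      TyEquiv Δ (.seq T .skip) T ⟨.s, m⟩
  | assoc {T U V} : Kinding Δ (.seq (.seq T U) V) ⟨.s, .lin⟩ →
      TyEquiv Δ (.seq (.seq T U) V) (.seq T (.seq U V)) ⟨.s, .lin⟩
  | seqCong {T T' U U' m m'} : TyEquiv Δ T T' ⟨.s, m⟩ →
      TyEquiv Δ U U' ⟨.s, m'⟩ →
      TyEquiv Δ (.seq T U) (.seq T' U') ⟨.s, .lin⟩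
  | arrowCong {T T' U U' κ₁ κ₂ m} : TyEquiv Δ T T' κ₁ → TyEquiv Δ U U' κ₂ →
      TyEquiv Δ (.arrow m T U) (.arrow m T' U') ⟨.t, m⟩
  | outCong {T T'} : TyEquiv Δ T T' ⟨.m, .lin⟩ →
      TyEquiv Δ (.out T) (.out T') ⟨.s, .lin⟩
  | innCong {T T'} : TyEquiv Δ T T' ⟨.m, .lin⟩ →
      TyEquiv Δ (.inn T) (.inn T') ⟨.s, .lin⟩
  | sub {T U κ₁ κ₂} : TyEquiv Δ T U κ₁ → Subkind κ₁ κ₂ → TyEquiv Δ T U κ₂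

/-- Right-append concatenation `⋆`: `T ⋆ Skip = T`,
    `(T;U) ⋆ V = T;(U ⋆ V)` for `V ≠ Skip`, and `T ⋆ U = T;U` otherwise. -/
def tappend : Ty → Ty → Ty
  | T, .skip => T
  | .seq T U, V => .seq T (tappend U V)
  | T, U => .seq T U

/-- Type normalisation `T ⇓ U`. -/
inductive NormT : Ty → Ty → Prop
  | seqDone {T U U'} : Done T → NormT U U' → NormT (.seq T U) U'
  | seqCons {T U T'} : ¬ Done T → NormT T T' →
      NormT (.seq T U) (tappend T' U)
  | mu {a κ T T'} : NormT T T' →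
      NormT (.mu a κ T) (subOne a (.mu a κ T') T')
  | other {T} : (∀ U V, T ≠ .seq U V) → (∀ a κ U, T ≠ .mu a κ U) →
      NormT T T

/-- Expressions of the functional core. -/
inductive Expr
  | evar (x : String)
  | abs (m : Mult) (x : String) (T : Ty) (e : Expr)
  | app (e₁ e₂ : Expr)
  | unit

/-- Typing contexts. -/
abbrev Ctx := List (String × Ty)

/-- `T` is an unrestricted type (checks against kind `t^un`). -/
def UnTy (Δ : KCtx) (T : Ty) : Prop := Kinding Δ T ⟨.t, .un⟩

/-- All bindings of `Γ` are unrestricted. -/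
def CtxUn (Δ : KCtx) (Γ : Ctx) : Prop := ∀ b ∈ Γ, UnTy Δ b.2

/-- The unrestricted portions of `Γ₁` and `Γ₂` coincide: `U(Γ₁) = U(Γ₂)`. -/
def SameUn (Δ : KCtx) (Γ₁ Γ₂ : Ctx) : Prop :=
  ∀ x T, UnTy Δ T → ((x, T) ∈ Γ₁ ↔ (x, T) ∈ Γ₂)

/-- The linear portion of `Γ₂` is contained in that of `Γ₁`:
    `L(Γ₂) ⊆ L(Γ₁)`. -/
def LinSub (Δ : KCtx) (Γ₂ Γ₁ : Ctx) : Prop :=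
  ∀ x T, ¬ UnTy Δ T → (x, T) ∈ Γ₂ → (x, T) ∈ Γ₁

/-- Context difference `Δ ⊢ Γ ÷ x = Γ'`. -/
inductive CtxDiff (Δ : KCtx) : Ctx → String → Ctx → Prop
  | notin {Γ x} : (∀ T, (x, T) ∉ Γ) → CtxDiff Δ Γ x Γ
  | remove {Γ₁ Γ₂ x T} : AlgChk Δ T ⟨.t, .un⟩ →
      CtxDiff Δ (Γ₁ ++ (x, T) :: Γ₂) x (Γ₁ ++ Γ₂)

/-- Iterated context difference `Γ ÷ x₁ ÷ ... ÷ xₙ`. -/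
inductive CtxDiffs (Δ : KCtx) : Ctx → List String → Ctx → Prop
  | nil {Γ} : CtxDiffs Δ Γ [] Γ
  | cons {Γ Γ' Γ'' x xs} : CtxDiff Δ Γ x Γ' → CtxDiffs Δ Γ' xs Γ'' →
      CtxDiffs Δ Γ (x :: xs) Γ''

/-- Context split `Γ = Γ₁ ∘ Γ₂`: unrestricted bindings are shared, linear
    bindings are distributed. -/
inductive Split (Δ : KCtx) : Ctx → Ctx → Ctx → Prop
  | nil : Split Δ [] [] []
  | both {Γ Γ₁ Γ₂ x T} : UnTy Δ T → Split Δ Γ Γ₁ Γ₂ →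
      Split Δ ((x, T) :: Γ) ((x, T) :: Γ₁) ((x, T) :: Γ₂)
  | left {Γ Γ₁ Γ₂ x T} : ¬ UnTy Δ T → Split Δ Γ Γ₁ Γ₂ →
      Split Δ ((x, T) :: Γ) ((x, T) :: Γ₁) Γ₂
  | right {Γ Γ₁ Γ₂ x T} : ¬ UnTy Δ T → Split Δ Γ Γ₁ Γ₂ →
      Split Δ ((x, T) :: Γ) Γ₁ ((x, T) :: Γ₂)

/-- Declarative typing `Δ; Γ ⊢ e : T` with context split and a
    type-equivalence conversion rule. -/
inductive DTy (Δ : KCtx) : Ctx → Expr → Ty → Prop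
  | evar {Γ₁ Γ₂ x T} : CtxUn Δ Γ₁ → CtxUn Δ Γ₂ →
      DTy Δ (Γ₁ ++ (x, T) :: Γ₂) (.evar x) T
  | unit {Γ} : CtxUn Δ Γ → DTy Δ Γ .unit .unit
  | abs {Γ m x T e U κ} : Kinding Δ T κ →
      DTy Δ (Γ ++ [(x, T)]) e U → (m = .un → CtxUn Δ Γ) →
      DTy Δ Γ (.abs m x T e) (.arrow m T U)
  | app {Γ Γ₁ Γ₂ e₁ e₂ m T U} : Split Δ Γ Γ₁ Γ₂ →
      DTy Δ Γ₁ e₁ (.arrow m T U) → DTy Δ Γ₂ e₂ T →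
      DTy Δ Γ (.app e₁ e₂) U
  | eq {Γ e T U κ} : DTy Δ Γ e T → TyEquiv Δ T U κ → DTy Δ Γ e U

mutual
  /-- Algorithmic type synthesis `Δ; Γ₁ ⊢ e ⇒ T ⊣ Γ₂`. -/
  inductive Syn : KCtx → Ctx → Expr → Ty → Ctx → Prop
    | linVar {Δ Γ₁ Γ₂ x T υ} : AlgKind Δ T ⟨υ, .lin⟩ →
        Syn Δ (Γ₁ ++ (x, T) :: Γ₂) (.evar x) T (Γ₁ ++ Γ₂)
    | unVar {Δ Γ₁ Γ₂ x T υ} : AlgKind Δ T ⟨υ, .un⟩ →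
        Syn Δ (Γ₁ ++ (x, T) :: Γ₂) (.evar x) T (Γ₁ ++ (x, T) :: Γ₂)
    | unit {Δ Γ} : Syn Δ Γ .unit .unit Γ
    | linAbs {Δ Γ₁ Γ₂ Γ₃ x T e U κ} : AlgKind Δ T κ →
        Syn Δ (Γ₁ ++ [(x, T)]) e U Γ₂ → CtxDiff Δ Γ₂ x Γ₃ →
        Syn Δ Γ₁ (.abs .lin x T e) (.arrow .lin T U) Γ₃
    | unAbs {Δ Γ₁ Γ₂ x T e U κ} : AlgKind Δ T κ →
        Syn Δ (Γ₁ ++ [(x, T)]) e U Γ₂ → CtxDiff Δ Γ₂ x Γ₁ →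
        Syn Δ Γ₁ (.abs .un x T e) (.arrow .un T U) Γ₁
    | app {Δ Γ₁ Γ₂ Γ₃ e₁ e₂ A m T U} : Syn Δ Γ₁ e₁ A Γ₂ →
        NormT A (.arrow m T U) → Chk Δ Γ₂ e₂ T Γ₃ →
        Syn Δ Γ₁ (.app e₁ e₂) U Γ₃

  /-- Algorithmic check-against `Δ; Γ₁ ⊢ e ⇐ T ⊣ Γ₂`. -/
  inductive Chk : KCtx → Ctx → Expr → Ty → Ctx → Prop
    | eq {Δ Γ₁ Γ₂ e T U κ} : Syn Δ Γ₁ e U Γ₂ → TyEquiv Δ T U κ →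
        Chk Δ Γ₁ e T Γ₂
end

/-- `x` occurs in `e`. -/
def occursE (x : String) : Expr → Prop
  | .evar y => y = x
  | .abs _ y _ e => y = x ∨ occursE x e
  | .app e₁ e₂ => occursE x e₁ ∨ occursE x e₂
  | .unit => False

/-- The linear portions of `Γ₁` and `Γ₂` coincide. -/
def LinEq (Δ : KCtx) (Γ₁ Γ₂ : Ctx) : Prop :=
  ∀ y T, ¬ AlgChk Δ T ⟨.t, .un⟩ → ((y, T) ∈ Γ₁ ↔ (y, T) ∈ Γ₂)

section LinEq

variable {Δ : KCtx}

theorem LinEq.refl (Γ : Ctx) : LinEq Δ Γ Γ := fun _ _ _ => Iff.rfl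

theorem LinEq.trans {Γ₁ Γ₂ Γ₃ : Ctx} (h₁₂ : LinEq Δ Γ₁ Γ₂) (h₂₃ : LinEq Δ Γ₂ Γ₃) :
    LinEq Δ Γ₁ Γ₃ :=
  fun y T hT => (h₁₂ y T hT).trans (h₂₃ y T hT)

theorem CtxDiff.linEq {Γ₁ Γ₂ : Ctx} {x : String} (h : CtxDiff Δ Γ₁ x Γ₂) :
    LinEq Δ Γ₁ Γ₂ := by
  cases h with
  | notin _ => exact LinEq.refl _
  | @remove Γ₁ Γ₂ x T hT =>
    intro y U hU
    have hne : (y, U) ≠ (x, T) := by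
      rintro ⟨-, rfl⟩
      exact hU hT
    rw [List.perm_middle.mem_iff, List.mem_cons, or_iff_right hne]

theorem CtxDiffs.linEq {Γ₁ Γ₂ : Ctx} {xs : List String} (h : CtxDiffs Δ Γ₁ xs Γ₂) :
    LinEq Δ Γ₁ Γ₂ := by
  induction h with
  | nil => exact LinEq.refl _
  | cons hd _ ih => exact hd.linEq.trans ih

end LinEq

/-- Context difference preserves the linear portion of the context, and
    hence so does iterated context difference over a list of variables. -/
theorem ctxDiff_preserves_linear {Δ : KCtx} :
    (∀ {Γ₁ Γ₂ : Ctx} {x : String}, CtxDiff Δ Γ₁ x Γ₂ → LinEq Δ Γ₁ Γ₂) ∧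
    (∀ {Γ₁ Γ₂ : Ctx} {xs : List String}, CtxDiffs Δ Γ₁ xs Γ₂ →
      LinEq Δ Γ₁ Γ₂) :=
  ⟨CtxDiff.linEq, CtxDiffs.linEq⟩
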